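/- If 1 ≤ p < n and n − p < λ < n, then every f ∈ L^{1,λ}(Ω) belongs to the Stummel–Kato class S_p(Ω); moreover, there is a constant c > 0, independent of f and r, such that η_p(f, r) = sup_{x∈Ω} ∫_{Ω∩B_r(x)} |f(y)| / |x−y|^{n−p} dy ≤ c · r^{λ−n+p} · ‖f‖_{L^{1,λ}(Ω)} for all r > 0. In particular η_p(f,r) → 0 as r → 0. -/

import Mathlib

open MeasureTheory Metric Set Filter Topology
open scoped ENNReal

/-! Cut `B_r(x)` into the dyadic annuli `r 2^{-k-1} ≤ |x - y| < r 2^{-k}`. On the `k`-th annulus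
the kernel `|x - y|^{p-n}` is at most `(r 2^{-k-1})^{p-n}`, while the Morrey bound gives mass
`≲ (r 2^{-k})^λ`; the annulus thus contributes `≲ (r 2^{-k})^{λ-n+p}`, and since `λ - n + p > 0`
these terms form a geometric series with sum `≲ r^{λ-n+p}`. The Morrey bound is only assumed for
radii below `diam Ω`; it extends to all radii (with a worse constant) by covering the bounded set
`Ω` with finitely many balls of radius `diam Ω / 2`. -/

theorem diff_iInter_subset_iUnion_diff_succ {α : Type*} (S : ℕ → Set α) :
    S 0 \ ⋂ k, S k ⊆ ⋃ k, S k \ S (k + 1) := by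
  rintro y ⟨hy₀, hy⟩
  by_contra hy'
  refine hy (mem_iInter.2 fun k => ?_)
  induction k with
  | zero => exact hy₀
  | succ k ih => exact not_not.1 fun hk => hy' (mem_iUnion.2 ⟨k, ih, hk⟩)

theorem hasSum_div_two_pow_succ_rpow {r e : ℝ} (hr : 0 ≤ r) (he : 0 < e) :
    HasSum (fun k : ℕ => (r / 2 ^ (k + 1)) ^ e) (r ^ e / (2 ^ e - 1)) := by
  have h2e : 1 < (2 : ℝ) ^ e := Real.one_lt_rpow one_lt_two he
  have hterm : ∀ k : ℕ, (r / 2 ^ (k + 1)) ^ e = r ^ e * ((2 : ℝ) ^ e)⁻¹ * ((2 ^ e)⁻¹) ^ k := by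
    intro k
    rw [Real.div_rpow hr (by positivity), ← Real.rpow_pow_comm zero_le_two, pow_succ']
    simp only [div_eq_mul_inv, mul_inv, inv_pow]
    ring
  have hsum : r ^ e / (2 ^ e - 1) = r ^ e * ((2 : ℝ) ^ e)⁻¹ * (1 - ((2 : ℝ) ^ e)⁻¹)⁻¹ := by
    have : (2 : ℝ) ^ e - 1 ≠ 0 := by linarith
    field_simp
  rw [funext hterm, hsum]
  exact (hasSum_geometric_of_lt_one (by positivity) (inv_lt_one_of_one_lt₀ h2e)).mul_left _

theorem integral_le_of_lintegral_ofReal_le {α : Type*} [MeasurableSpace α] {μ : Measure α}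
    {f : α → ℝ} (hf : 0 ≤ᵐ[μ] f) {B : ℝ} (hB : 0 ≤ B)
    (h : ∫⁻ y, ENNReal.ofReal (f y) ∂μ ≤ ENNReal.ofReal B) : ∫ y, f y ∂μ ≤ B := by
  by_cases hfi : Integrable f μ
  · rwa [← ENNReal.ofReal_le_ofReal_iff hB, ofReal_integral_eq_lintegral_ofReal hfi hf]
  · rwa [integral_undef hfi]

theorem exists_pos_forall_mul_rpow_le (a : ℝ) {e : ℝ} (he : 0 < e) {ε : ℝ} (hε : 0 < ε) :
    ∃ δ > 0, ∀ r : ℝ, 0 < r → r < δ → a * r ^ e ≤ ε := by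
  have hlim : Tendsto (fun r : ℝ => a * r ^ e) (𝓝 0) (𝓝 0) := by
    simpa [Real.zero_rpow he.ne'] using
      ((Real.continuousAt_rpow_const 0 e (Or.inr he.le)).const_mul a).tendsto
  obtain ⟨δ, hδ, hclose⟩ := Metric.tendsto_nhds_nhds.1 hlim ε hε
  refine ⟨δ, hδ, fun r hr hrδ => ?_⟩
  have := hclose (by rwa [Real.dist_0_eq_abs, abs_of_pos hr])
  rw [Real.dist_0_eq_abs] at this
  exact (le_abs_self _).trans this.le

theorem setLIntegral_le_card_mul_of_subset_biUnion {α ι : Type*} [MeasurableSpace α]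
    {μ : Measure α} {g : α → ℝ≥0∞} {s : Set α} {t : Finset ι} {U : ι → Set α}
    (hcov : s ⊆ ⋃ i ∈ t, U i) {B : ℝ≥0∞} (hB : ∀ i ∈ t, ∫⁻ y in s ∩ U i, g y ∂μ ≤ B) :
    ∫⁻ y in s, g y ∂μ ≤ t.card * B := by
  have hcov' : s ⊆ ⋃ i : t, s ∩ U i := fun y hy => by
    obtain ⟨i, hi, hyi⟩ := mem_iUnion₂.1 (hcov hy)
    exact mem_iUnion.2 ⟨⟨i, hi⟩, hy, hyi⟩
  calc ∫⁻ y in s, g y ∂μ ≤ ∫⁻ y in ⋃ i : t, s ∩ U i, g y ∂μ := lintegral_mono_set hcov'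
    _ ≤ ∑' i : t, ∫⁻ y in s ∩ U i, g y ∂μ := lintegral_iUnion_le _ _
    _ ≤ ∑' _ : t, B := ENNReal.tsum_le_tsum fun i => hB i i.2
    _ = t.card * B := by simp [tsum_fintype]

section DyadicAnnuli

variable {X : Type*} [PseudoMetricSpace X]

theorem ball_subset_iInter_union_iUnion_annulus (x : X) (r : ℝ) :
    ball x r ⊆ (⋂ k : ℕ, ball x (r / 2 ^ k)) ∪
      ⋃ k : ℕ, ball x (r / 2 ^ k) \ ball x (r / 2 ^ (k + 1)) := by
  intro y hy
  by_cases hy' : y ∈ ⋂ k : ℕ, ball x (r / 2 ^ k)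
  · exact Or.inl hy'
  · exact Or.inr <| diff_iInter_subset_iUnion_diff_succ (fun k => ball x (r / 2 ^ k))
      ⟨by simpa using hy, hy'⟩

theorem dist_eq_zero_of_mem_iInter_ball {x y : X} {r : ℝ}
    (hy : y ∈ ⋂ k : ℕ, ball x (r / 2 ^ k)) : dist x y = 0 := by
  have hlim : Tendsto (fun k : ℕ => r / 2 ^ k) atTop (𝓝 0) := by
    simpa [div_eq_mul_inv] using (tendsto_pow_atTop_nhds_zero_of_lt_one
      (r := (2 : ℝ)⁻¹) (by norm_num) (by norm_num)).const_mul r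
  refine le_antisymm (ge_of_tendsto' hlim fun k => ?_) dist_nonneg
  rw [dist_comm]
  exact (mem_ball.1 (mem_iInter.1 hy k)).le

end DyadicAnnuli

section RieszPotential

variable {X : Type*} [PseudoMetricSpace X] [MeasurableSpace X] [OpensMeasurableSpace X]
  {ν : Measure X} (f : X → ℝ) (x : X)

theorem setLIntegral_annulus_div_rpow_le {q s : ℝ} (hq : 0 ≤ q) (hs : 0 < s) (ρ : ℝ) :
    ∫⁻ y in ball x ρ \ ball x s, ENNReal.ofReal (|f y| / dist x y ^ q) ∂ν
      ≤ ENNReal.ofReal ((s ^ q)⁻¹) * ∫⁻ y in ball x ρ, ENNReal.ofReal |f y| ∂ν := by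
  have hpointwise : ∀ y ∈ ball x ρ \ ball x s,
      ENNReal.ofReal (|f y| / dist x y ^ q)
        ≤ ENNReal.ofReal ((s ^ q)⁻¹) * ENNReal.ofReal |f y| := by
    rintro y ⟨-, hys⟩
    have hsy : s ≤ dist x y := by rw [dist_comm]; exact not_lt.1 hys
    rw [← ENNReal.ofReal_mul (by positivity), inv_mul_eq_div]
    gcongr
  calc ∫⁻ y in ball x ρ \ ball x s, ENNReal.ofReal (|f y| / dist x y ^ q) ∂ν
      ≤ ∫⁻ y in ball x ρ \ ball x s, ENNReal.ofReal ((s ^ q)⁻¹) * ENNReal.ofReal |f y| ∂ν :=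
        setLIntegral_mono' (measurableSet_ball.diff measurableSet_ball) hpointwise
    _ = ENNReal.ofReal ((s ^ q)⁻¹) * ∫⁻ y in ball x ρ \ ball x s, ENNReal.ofReal |f y| ∂ν :=
        lintegral_const_mul' _ _ ENNReal.ofReal_ne_top
    _ ≤ ENNReal.ofReal ((s ^ q)⁻¹) * ∫⁻ y in ball x ρ, ENNReal.ofReal |f y| ∂ν := by
        gcongr
        exact sdiff_subset

theorem setLIntegral_ball_div_rpow_le {q lam M r : ℝ} (hq : 0 < q) (hqlam : q < lam)
    (hM : 0 ≤ M) (hr : 0 < r)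
    (hgrowth : ∀ ρ > 0, ∫⁻ y in ball x ρ, ENNReal.ofReal |f y| ∂ν ≤ ENNReal.ofReal (M * ρ ^ lam)) :
    ∫⁻ y in ball x r, ENNReal.ofReal (|f y| / dist x y ^ q) ∂ν
      ≤ ENNReal.ofReal (2 ^ lam / (2 ^ (lam - q) - 1) * M * r ^ (lam - q)) := by
  set G : X → ℝ≥0∞ := fun y => ENNReal.ofReal (|f y| / dist x y ^ q)
  -- `G` vanishes where `dist x y = 0` only through the junk value `a / 0 = 0`.
  have hcentre : ∫⁻ y in ⋂ k : ℕ, ball x (r / 2 ^ k), G y ∂ν = 0 := by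
    rw [setLIntegral_congr_fun (MeasurableSet.iInter fun _ => measurableSet_ball)
      (g := fun _ => 0) fun y hy => ?_, lintegral_zero]
    simp [G, dist_eq_zero_of_mem_iInter_ball hy, Real.zero_rpow hq.ne']
  have hannulus : ∀ k : ℕ, ∫⁻ y in ball x (r / 2 ^ k) \ ball x (r / 2 ^ (k + 1)), G y ∂ν
      ≤ ENNReal.ofReal (2 ^ lam * M * (r / 2 ^ (k + 1)) ^ (lam - q)) := by
    intro k
    set s := r / 2 ^ (k + 1)
    have hs : 0 < s := by positivity
    have hks : r / 2 ^ k = 2 * s := by simp only [s, pow_succ]; field_simp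
    calc ∫⁻ y in ball x (r / 2 ^ k) \ ball x s, G y ∂ν
        ≤ ENNReal.ofReal ((s ^ q)⁻¹) * ∫⁻ y in ball x (2 * s), ENNReal.ofReal |f y| ∂ν := by
          rw [← hks]; exact setLIntegral_annulus_div_rpow_le f x hq.le hs _
      _ ≤ ENNReal.ofReal ((s ^ q)⁻¹) * ENNReal.ofReal (M * (2 * s) ^ lam) := by
          gcongr; exact hgrowth _ (by positivity)
      _ = ENNReal.ofReal (2 ^ lam * M * s ^ (lam - q)) := by
          rw [← ENNReal.ofReal_mul (by positivity), Real.mul_rpow zero_le_two hs.le,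
            Real.rpow_sub hs]
          field_simp
  calc ∫⁻ y in ball x r, G y ∂ν
      ≤ ∫⁻ y in (⋂ k : ℕ, ball x (r / 2 ^ k)) ∪
          ⋃ k : ℕ, ball x (r / 2 ^ k) \ ball x (r / 2 ^ (k + 1)), G y ∂ν :=
        lintegral_mono_set (ball_subset_iInter_union_iUnion_annulus x r)
    _ ≤ ∑' k : ℕ, ∫⁻ y in ball x (r / 2 ^ k) \ ball x (r / 2 ^ (k + 1)), G y ∂ν := by
        refine (lintegral_union_le _ _ _).trans ?_
        rw [hcentre, zero_add]
        exact lintegral_iUnion_le _ _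
    _ ≤ ∑' k : ℕ, ENNReal.ofReal (2 ^ lam * M * (r / 2 ^ (k + 1)) ^ (lam - q)) :=
        ENNReal.tsum_le_tsum hannulus
    _ = ENNReal.ofReal (2 ^ lam / (2 ^ (lam - q) - 1) * M * r ^ (lam - q)) := by
        have hsum := (hasSum_div_two_pow_succ_rpow hr.le (sub_pos.2 hqlam)).mul_left (2 ^ lam * M)
        rw [← ENNReal.ofReal_tsum_of_nonneg (fun k => by positivity) hsum.summable, hsum.tsum_eq]
        ring_nf

theorem setIntegral_inter_ball_div_rpow_le {μ : Measure X} {Ω : Set X} {q lam M r : ℝ}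
    (hq : 0 < q) (hqlam : q < lam) (hM : 0 ≤ M) (hr : 0 < r)
    (hgrowth : ∀ ρ > 0,
      ∫⁻ y in Ω ∩ ball x ρ, ENNReal.ofReal |f y| ∂μ ≤ ENNReal.ofReal (M * ρ ^ lam)) :
    ∫ y in Ω ∩ ball x r, |f y| / dist x y ^ q ∂μ
      ≤ 2 ^ lam / (2 ^ (lam - q) - 1) * M * r ^ (lam - q) := by
  have h2 : 0 < (2 : ℝ) ^ (lam - q) - 1 :=
    sub_pos.2 (Real.one_lt_rpow one_lt_two (sub_pos.2 hqlam))
  refine integral_le_of_lintegral_ofReal_le (ae_of_all _ fun y => by positivity)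
    (by positivity) ?_
  have hpot := setLIntegral_ball_div_rpow_le (ν := μ.restrict Ω) f x hq hqlam hM hr
    fun ρ hρ => by
      rw [Measure.restrict_restrict measurableSet_ball, inter_comm]
      exact hgrowth ρ hρ
  rwa [Measure.restrict_restrict measurableSet_ball, inter_comm] at hpot

end RieszPotential

theorem exists_setLIntegral_inter_ball_le_of_lt_diam {X : Type*} [MetricSpace X] [ProperSpace X]
    [MeasurableSpace X] (μ : Measure X) [NullSingletonClass μ] {Ω : Set X}
    (hΩ : Bornology.IsBounded Ω) {lam : ℝ} (hlam : 0 ≤ lam) :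
    ∃ C > (0 : ℝ), ∀ (g : X → ℝ≥0∞) (N : ℝ), 0 ≤ N →
      (∀ x ∈ Ω, ∀ ρ : ℝ, 0 < ρ → ρ < diam Ω →
        ∫⁻ y in Ω ∩ ball x ρ, g y ∂μ ≤ ENNReal.ofReal (N * ρ ^ lam)) →
      ∀ x ∈ Ω, ∀ ρ : ℝ, 0 < ρ →
        ∫⁻ y in Ω ∩ ball x ρ, g y ∂μ ≤ ENNReal.ofReal (C * N * ρ ^ lam) := by
  rcases (diam_nonneg (s := Ω)).eq_or_lt with hd | hd
  · have hΩs : Ω.Subsingleton := not_nontrivial_iff.1 fun h => (diam_pos h hΩ).ne hd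
    refine ⟨1, one_pos, fun g N _ _ x _ ρ _ => ?_⟩
    rw [setLIntegral_measure_zero _ _ ((hΩs.anti inter_subset_left).measure_zero μ)]
    exact zero_le
  obtain ⟨t, htΩ, ht, hcov⟩ := finite_approx_of_totallyBounded
    (hΩ.isCompact_closure.totallyBounded.subset subset_closure) (diam Ω / 2) (half_pos hd)
  refine ⟨ht.toFinset.card + 1, by positivity, fun g N hN hg x hx ρ hρ => ?_⟩
  have hN' : 0 ≤ N * ρ ^ lam := by positivity
  rcases lt_or_ge ρ (diam Ω) with hρd | hρd
  · refine (hg x hx ρ hρ hρd).trans (ENNReal.ofReal_le_ofReal ?_)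
    rw [mul_assoc]
    exact le_mul_of_one_le_left hN' (by simp)
  have hΩ_le : ∫⁻ y in Ω, g y ∂μ ≤ ht.toFinset.card * ENNReal.ofReal (N * (diam Ω / 2) ^ lam) :=
    setLIntegral_le_card_mul_of_subset_biUnion (by simpa using hcov) fun y hy =>
      hg y (htΩ (ht.mem_toFinset.1 hy)) _ (half_pos hd) (half_lt_self hd)
  refine (lintegral_mono_set inter_subset_left).trans (hΩ_le.trans ?_)
  rw [← ENNReal.ofReal_natCast, ← ENNReal.ofReal_mul (by positivity), mul_assoc]
  refine ENNReal.ofReal_le_ofReal (mul_le_mul (by simp) ?_ (by positivity) (by positivity))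
  gcongr
  linarith

theorem morrey_subset_stummel_general
    (n : ℕ) (p lam : ℝ) (hp : 1 ≤ p) (hpn : p < n)
    (hl1 : (n : ℝ) - p < lam)
    (Ω : Set (EuclideanSpace ℝ (Fin n)))
    (hΩb : Bornology.IsBounded Ω) :
    ∃ c > (0 : ℝ), ∀ (f : EuclideanSpace ℝ (Fin n) → ℝ) (N : ℝ), 0 ≤ N →
      IntegrableOn f Ω →
      (∀ x ∈ Ω, ∀ ρ : ℝ, 0 < ρ → ρ < Metric.diam Ω →
        ∫ y in Ω ∩ Metric.ball x ρ, |f y| ≤ N * ρ ^ lam) →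
      (∀ r : ℝ, 0 < r → ∀ x ∈ Ω,
        ∫ y in Ω ∩ Metric.ball x r, |f y| / ‖x - y‖ ^ ((n : ℝ) - p)
          ≤ c * r ^ (lam - n + p) * N) ∧
      (∀ ε > (0 : ℝ), ∃ δ > (0 : ℝ), ∀ r : ℝ, 0 < r → r < δ → ∀ x ∈ Ω,
        ∫ y in Ω ∩ Metric.ball x r, |f y| / ‖x - y‖ ^ ((n : ℝ) - p) ≤ ε) := by
  have : NeZero n := ⟨by rintro rfl; norm_num at hpn; linarith⟩
  have hq : 0 < (n : ℝ) - p := by linarith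
  have h2 : 0 < (2 : ℝ) ^ (lam - (n - p)) - 1 :=
    sub_pos.2 (Real.one_lt_rpow one_lt_two (sub_pos.2 hl1))
  obtain ⟨C, hC, hextend⟩ :=
    exists_setLIntegral_inter_ball_le_of_lt_diam volume hΩb (hq.trans hl1).le
  set c : ℝ := 2 ^ lam / (2 ^ (lam - (n - p)) - 1) * C
  have hc : 0 < c := by positivity
  refine ⟨c, hc, fun f N hN hf hmorrey => ?_⟩
  have hgrowth : ∀ x ∈ Ω, ∀ ρ > 0,
      ∫⁻ y in Ω ∩ ball x ρ, ENNReal.ofReal |f y| ≤ ENNReal.ofReal (C * N * ρ ^ lam) :=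
    hextend _ N hN fun x hx ρ hρ hρd => by
      rw [← ofReal_integral_eq_lintegral_ofReal (hf.mono_set inter_subset_left).abs
        (ae_of_all _ fun _ => abs_nonneg _)]
      exact ENNReal.ofReal_le_ofReal (hmorrey x hx ρ hρ hρd)
  have hbound : ∀ r : ℝ, 0 < r → ∀ x ∈ Ω,
      ∫ y in Ω ∩ ball x r, |f y| / ‖x - y‖ ^ ((n : ℝ) - p) ≤ c * r ^ (lam - n + p) * N := by
    intro r hr x hx
    simp_rw [← dist_eq_norm]
    convert setIntegral_inter_ball_div_rpow_le f x hq hl1 (mul_nonneg hC.le hN) hr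
      (hgrowth x hx) using 1
    simp only [c]
    ring_nf
  refine ⟨hbound, fun ε hε => ?_⟩
  obtain ⟨δ, hδ, hsmall⟩ := exists_pos_forall_mul_rpow_le (c * N) (by linarith : 0 < lam - n + p) hε
  exact ⟨δ, hδ, fun r hr hrδ x hx => (hbound r hr x hx).trans (by linarith [hsmall r hr hrδ])⟩

/-- If `1 ≤ p < n` and `n - p < λ < n`, then every `f ∈ L^{1,λ}(Ω)` belongs to
the Stummel–Kato class `S_p(Ω)`, with `η_p(f,r) ≤ c r^{λ-n+p} ‖f‖_{L^{1,λ}}`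
for a constant `c` independent of `f` and `r`; in particular `η_p(f,r) → 0`
as `r → 0`. -/
theorem morrey_subset_stummel
    (n : ℕ) (p lam : ℝ) (hp : 1 ≤ p) (hpn : p < n)
    (hl1 : (n : ℝ) - p < lam) (hl2 : lam < n)
    (Ω : Set (EuclideanSpace ℝ (Fin n))) (hΩo : IsOpen Ω) (hΩne : Ω.Nonempty)
    (hΩb : Bornology.IsBounded Ω) :
    ∃ c > (0 : ℝ), ∀ (f : EuclideanSpace ℝ (Fin n) → ℝ) (N : ℝ), 0 ≤ N →
      IntegrableOn f Ω →
      (∀ x ∈ Ω, ∀ ρ : ℝ, 0 < ρ → ρ < Metric.diam Ω →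
        ∫ y in Ω ∩ Metric.ball x ρ, |f y| ≤ N * ρ ^ lam) →
      (∀ r : ℝ, 0 < r → ∀ x ∈ Ω,
        ∫ y in Ω ∩ Metric.ball x r, |f y| / ‖x - y‖ ^ ((n : ℝ) - p)
          ≤ c * r ^ (lam - n + p) * N) ∧
      (∀ ε > (0 : ℝ), ∃ δ > (0 : ℝ), ∀ r : ℝ, 0 < r → r < δ → ∀ x ∈ Ω,
        ∫ y in Ω ∩ Metric.ball x r, |f y| / ‖x - y‖ ^ ((n : ℝ) - p) ≤ ε) :=
  morrey_subset_stummel_general n p lam hp hpn hl1 Ω hΩb
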